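/- arXiv:1701.00328 — 5 statements merged into one kernel-verified Lean document; each statement's English description precedes it below -/
import Mathlib

section
/- For every integer m ≥ 3, the polynomial g_m(x) = 2x^3 - (m-3)x^2 + (2m-4)x - (m-1) has a unique real root in the open interval (0,1). -/
def gpoly (m : ℤ) (x : ℝ) : ℝ :=
  2 * x ^ 3 - ((m : ℝ) - 3) * x ^ 2 + (2 * (m : ℝ) - 4) * x - ((m : ℝ) - 1)

theorem gpoly_unique_root (m : ℤ) (hm : 3 ≤ m) :
    ∃! x : ℝ, x ∈ Set.Ioo (0 : ℝ) 1 ∧ gpoly m x = 0 := by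
  have hmr : (3 : ℝ) ≤ (m : ℝ) := by exact_mod_cast hm
  have hmono : StrictMonoOn (gpoly m) (Set.Icc (0 : ℝ) 1) := by
    intro x hx y hy hxy
    simp only [Set.mem_Icc] at hx hy
    unfold gpoly
    nlinarith [sq_nonneg (x + y), sq_nonneg (x - y), sq_nonneg x, sq_nonneg y,
      mul_nonneg hx.1 hy.1, mul_nonneg (le_of_lt (sub_pos.mpr hxy)) (mul_nonneg (sub_nonneg.mpr hmr) (by linarith : (0:ℝ) ≤ 2 - x - y))]
  have hcont : ContinuousOn (gpoly m) (Set.Icc (0 : ℝ) 1) := by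
    unfold gpoly; fun_prop
  have h0 : gpoly m 0 < 0 := by unfold gpoly; nlinarith
  have h1 : gpoly m 1 = 2 := by unfold gpoly; ring
  have hiv := intermediate_value_Ioo (le_of_lt zero_lt_one) hcont
  have : (0 : ℝ) ∈ Set.Ioo (gpoly m 0) (gpoly m 1) := by
    constructor
    · exact h0
    · rw [h1]; norm_num
  obtain ⟨x, hx, hgx⟩ := hiv this
  refine ⟨x, ⟨hx, hgx⟩, ?_⟩
  rintro y ⟨hy, hgy⟩
  have hinj := hmono.injOn
  exact hinj (Set.mem_Icc_of_Ioo hy) (Set.mem_Icc_of_Ioo hx) (by rw [hgy, hgx])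
end

section
/- For every integer m ≥ 3, μ_m < λ_m < 1, where λ_m is the unique root in (0,1) of g_m(x) = 2x^3 - (m-3)x^2 + (2m-4)x - (m-1) and μ_m = √(m-1)/(√(m-1)+√2). -/
noncomputable def mu (m : ℤ) : ℝ :=
  Real.sqrt ((m : ℝ) - 1) / (Real.sqrt ((m : ℝ) - 1) + Real.sqrt 2)

theorem mu_lt_lambda_lt_one (m : ℤ) (hm : 3 ≤ m) (lam : ℝ)
    (h1 : lam ∈ Set.Ioo (0 : ℝ) 1) (h2 : gpoly m lam = 0) :
    mu m < lam ∧ lam < 1 := by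
  obtain ⟨hl0, hl1⟩ := h1
  refine ⟨?_, hl1⟩
  have hm' : (3 : ℝ) ≤ (m : ℝ) := by exact_mod_cast hm
  set a := Real.sqrt ((m : ℝ) - 1) with ha
  set b := Real.sqrt 2 with hb
  have ha2 : a ^ 2 = (m : ℝ) - 1 := Real.sq_sqrt (by linarith)
  have hb2 : b ^ 2 = 2 := Real.sq_sqrt (by norm_num)
  have hapos : 0 < a := Real.sqrt_pos.mpr (by linarith)
  have hbpos : 0 < b := Real.sqrt_pos.mpr (by norm_num)
  have habpos : 0 < a + b := by linarith
  have hmu : mu m = a / (a + b) := rfl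
  have hmu0 : 0 < mu m := by rw [hmu]; positivity
  have hmu1 : mu m < 1 := by
    rw [hmu, div_lt_one habpos]; linarith
  have expand : gpoly m (mu m) * (a + b) ^ 3 =
      2 * a ^ 3 - ((m : ℝ) - 3) * a ^ 2 * (a + b) + (2 * (m : ℝ) - 4) * a * (a + b) ^ 2
        - ((m : ℝ) - 1) * (a + b) ^ 3 := by
    rw [hmu]; unfold gpoly; field_simp
  have key : gpoly m (mu m) * (a + b) ^ 3 = -4 * a - 4 * ((m : ℝ) - 1) * b := by
    rw [expand]
    linear_combination (2 * a - 2 * b) * ha2 + (-(((m : ℝ) + 1)) * a - ((m : ℝ) - 1) * b) * hb2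
  have hgmu : gpoly m (mu m) < 0 := by
    by_contra h
    push_neg at h
    have h3 : (0 : ℝ) < (a + b) ^ 3 := by positivity
    nlinarith [mul_nonneg h h3.le]
  by_contra hcon
  push_neg at hcon
  set u := mu m
  have hQ : 0 < 2 * (u ^ 2 + u * lam + lam ^ 2) + ((m : ℝ) - 3) * (2 - u - lam) + 2 := by
    nlinarith [sq_nonneg u, sq_nonneg lam, mul_pos hmu0 hl0]
  have hfac : gpoly m u - gpoly m lam =
      (u - lam) * (2 * (u ^ 2 + u * lam + lam ^ 2) + ((m : ℝ) - 3) * (2 - u - lam) + 2) := by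
    unfold gpoly; ring
  nlinarith [mul_nonneg (sub_nonneg.mpr hcon) hQ.le]
end

section
/- The sequence λ_m, where λ_m is the unique root in (0,1) of g_m(x) = 2x^3 - (m-3)x^2 + (2m-4)x - (m-1), converges to 1 as m → ∞. -/
theorem lambda_tendsto_one (lam : ℕ → ℝ)
    (hroot : ∀ m : ℕ, 3 ≤ m → lam m ∈ Set.Ioo (0 : ℝ) 1 ∧ gpoly (m : ℤ) (lam m) = 0) :
    Filter.Tendsto lam Filter.atTop (nhds 1) := by
  rw [show (1 : ℝ) = 0 + 1 by ring]
  have key : ∀ m : ℕ, 3 ≤ m → (lam m - 1) ^ 2 ≤ 6 / m := by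
    intro m hm
    obtain ⟨⟨h0, h1⟩, hg⟩ := hroot m hm
    have hmpos : (0 : ℝ) < m := by positivity
    rw [le_div_iff₀ hmpos]
    unfold gpoly at hg
    push_cast at hg
    nlinarith [sq_nonneg (lam m), sq_nonneg (lam m - 1), h0.le, h1.le]
  have hsq : Filter.Tendsto (fun m : ℕ => Real.sqrt (6 / m)) Filter.atTop (nhds 0) := by
    have h6 : Filter.Tendsto (fun m : ℕ => (6 : ℝ) / m) Filter.atTop (nhds 0) :=
      tendsto_const_div_atTop_nhds_zero_nat 6
    have := (Real.continuous_sqrt.tendsto 0).comp h6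
    rw [Real.sqrt_zero] at this
    exact this
  have hzero : Filter.Tendsto (fun m => lam m - 1) Filter.atTop (nhds 0) := by
    apply squeeze_zero_norm' _ hsq
    filter_upwards [Filter.eventually_atTop.2 ⟨3, fun m hm => key m hm⟩] with m hm
    rw [Real.norm_eq_abs, ← Real.sqrt_sq_eq_abs]
    exact Real.sqrt_le_sqrt hm
  simpa using hzero.add (tendsto_const_nhds : Filter.Tendsto (fun _ : ℕ => (1:ℝ)) Filter.atTop (nhds 1))
end

section
/- For every integer m ≥ 3, the unique root λ_m in (0,1) of g_m(x) = 2x^3 - (m-3)x^2 + (2m-4)x - (m-1) satisfies λ_m ≤ φ_m, where φ_m = (9m - 8 - √(54m - 8))/(9(m-2)); equivalently, if x ∈ (0,1) and x > φ_m then g_m(x) > 0. -/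
noncomputable def phi (m : ℤ) : ℝ :=
  (9 * (m : ℝ) - 8 - Real.sqrt (54 * (m : ℝ) - 8)) / (9 * ((m : ℝ) - 2))

lemma pos_of_gt_phi (m : ℤ) (hm : 3 ≤ m) (x : ℝ) (hx : x ∈ Set.Ioo (0 : ℝ) 1)
    (hpx : phi m < x) : 0 < gpoly m x := by
  obtain ⟨hx0, hx1⟩ := hx
  have hmr : (3 : ℝ) ≤ (m : ℝ) := by exact_mod_cast hm
  set M : ℝ := (m : ℝ) - 2 with hMdef
  have hM : 1 ≤ M := by simp [hMdef]; linarith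
  have hMpos : 0 < M := by linarith
  set t : ℝ := 1 - x with htdef
  have ht0 : 0 < t := by simp [htdef]; linarith
  have ht1 : t < 1 := by simp [htdef]; linarith
  set s : ℝ := Real.sqrt (54 * (m : ℝ) - 8) with hsdef
  have hs0 : 0 ≤ s := Real.sqrt_nonneg _
  have hs2 : s ^ 2 = 54 * (m : ℝ) - 8 := Real.sq_sqrt (by linarith)
  -- from phi m < x deduce s > 9*M*t + 10
  have h9M : 0 < 9 * M := by linarith
  have hlt : 9 * (m : ℝ) - 8 - s < x * (9 * M) := by
    have := (div_lt_iff₀ h9M).mp hpx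
    simpa [phi, hMdef, hsdef, mul_comm] using this
  have hkey0 : 9 * M * t + 10 < s := by
    have hm10 : 9 * (m : ℝ) - 8 = 9 * M + 10 := by simp [hMdef]; ring
    nlinarith [hlt]
  have hsq : (9 * M * t + 10) ^ 2 < s ^ 2 := by
    have h10 : 0 ≤ 9 * M * t + 10 := by positivity
    nlinarith [hkey0]
  -- so 81 M² t² + 180 M t < 54 M, divide by M
  have hdiv : 81 * M * t ^ 2 + 180 * t < 54 := by
    have h1 : M * (81 * M * t ^ 2 + 180 * t) < M * 54 := by
      have hm54 : (54 : ℝ) * (m : ℝ) - 8 = 54 * M + 100 := by simp [hMdef]; ring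
      nlinarith [hsq, hs2]
    exact lt_of_mul_lt_mul_left h1 (le_of_lt hMpos)
  have ht3 : t < 3 / 10 := by nlinarith [mul_pos hMpos (mul_pos ht0 ht0)]
  -- now conclude
  have hgx : gpoly m x = 2 - 8 * t + (7 - M) * t ^ 2 - 2 * t ^ 3 := by
    simp only [gpoly, htdef, hMdef]; ring
  rw [hgx]
  nlinarith [hdiv, sq_nonneg (t - 65 / 144), mul_pos ht0 ht0, mul_pos (mul_pos ht0 ht0) ht0,
    mul_pos hMpos (mul_pos ht0 ht0)]

theorem lambda_le_phi (m : ℤ) (hm : 3 ≤ m) :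
    (∀ lam : ℝ, lam ∈ Set.Ioo (0 : ℝ) 1 → gpoly m lam = 0 → lam ≤ phi m) ∧
    (∀ x : ℝ, x ∈ Set.Ioo (0 : ℝ) 1 → phi m < x → 0 < gpoly m x) := by
  refine ⟨?_, fun x hx hpx => pos_of_gt_phi m hm x hx hpx⟩
  intro lam hlam hroot
  by_contra hgt
  push_neg at hgt
  have := pos_of_gt_phi m hm lam hlam hgt
  rw [hroot] at this
  exact lt_irrefl 0 this
end

section
/- If a finite simple digraph G can be made acyclic by deleting t edges, then G contains a vertex v with out-degree d^+(v) ≤ √(2t). -/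
/-!
Number the vertices `0, …, n - 1` so that every arc that survives the deletions points to
a smaller number, and let `δ` be the minimum out-degree of `G`. At most `i` out-neighbours of
vertex `i` have smaller numbers, so at least `δ - i` (truncated at `0`) of its arcs were deleted.
Summing over `i`, `t ≥ δ + (δ - 1) + ⋯ + 1 = δ (δ + 1) / 2 ≥ δ² / 2`.
-/

/-- Out-degree of `v`: the number of out-neighbors. -/
noncomputable def outDeg {V : Type*} (Adj : V → V → Prop) (v : V) : ℕ :=
  {w | Adj v w}.ncard

/-- The set of vertices at directed distance exactly 2 from `v`. -/
def secondNbr {V : Type*} (Adj : V → V → Prop) (v : V) : Set V :=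
  {w | w ≠ v ∧ ¬ Adj v w ∧ ∃ u, Adj v u ∧ Adj u w}

/-- `Adj` has a directed cycle of length `k`. -/
def HasCycleOfLength {V : Type*} (Adj : V → V → Prop) (k : ℕ) : Prop :=
  ∃ c : Fin k → V, Function.Injective c ∧ ∀ i : Fin k, Adj (c i) (c ⟨(i.val + 1) % k, Nat.mod_lt _ i.pos⟩)

/-- `Adj` has no directed cycles. -/
def Acyclic {V : Type*} (Adj : V → V → Prop) : Prop :=
  ∀ k : ℕ, 1 ≤ k → ¬ HasCycleOfLength Adj k

/-- `Adj` is `m`-free: it has no directed cycle of length at most `m`. -/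
def MFree {V : Type*} (Adj : V → V → Prop) (m : ℕ) : Prop :=
  ∀ k : ℕ, 1 ≤ k → k ≤ m → ¬ HasCycleOfLength Adj k

/-- `T` is a tournament: irreflexive and exactly one arc between distinct vertices. -/
def IsTournament {V : Type*} (T : V → V → Prop) : Prop :=
  (∀ v, ¬ T v v) ∧ ∀ a b : V, a ≠ b → (T a b ↔ ¬ T b a)

/-- The number of arcs of `T` that are missing in `Adj`. -/
noncomputable def deletedCount {V : Type*} (T Adj : V → V → Prop) : ℕ :=
  {p : V × V | T p.1 p.2 ∧ ¬ Adj p.1 p.2}.ncard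


open Relation Finset

section Cycles

variable {V : Type*} {r : V → V → Prop}

theorem Relation.TransGen.exists_walk {a b : V} (h : TransGen r a b) :
    ∃ m, 1 ≤ m ∧ ∃ x : ℕ → V, x 0 = a ∧ x m = b ∧ ∀ i < m, r (x i) (x (i + 1)) := by
  induction h with
  | @single b hab =>
    refine ⟨1, le_rfl, fun k => if k = 0 then a else b, by simp, by simp, fun i hi => ?_⟩
    obtain rfl : i = 0 := by omega
    simpa using hab
  | @tail b c _ hbc ih =>
    obtain ⟨m, hm, x, hx0, hxm, hx⟩ := ih
    refine ⟨m + 1, by omega, fun k => if k ≤ m then x k else c, by simpa using hx0, by simp,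
      fun i hi => ?_⟩
    rcases Nat.lt_or_ge i m with hlt | hge
    · simpa [hlt.le, Nat.succ_le_of_lt hlt] using hx i hlt
    · obtain rfl : i = m := by omega
      simpa [hxm] using hbc

/-- A shortest closed walk is a cycle: a repeated vertex cuts out a shorter closed walk. -/
theorem Acyclic.false_of_closed_walk (h : Acyclic r) {m : ℕ} (hm : 1 ≤ m) {x : ℕ → V}
    (hx : x m = x 0) (hr : ∀ i < m, r (x i) (x (i + 1))) : False := by
  induction m using Nat.strong_induction_on generalizing x with
  | _ m ih =>
  by_cases hinj : ∀ i j, i < m → j < m → x i = x j → i = j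
  · refine h m hm ⟨fun i => x i, fun i j hij => Fin.ext (hinj _ _ i.2 j.2 hij), fun i => ?_⟩
    rcases (show (i : ℕ) + 1 ≤ m from i.2).lt_or_eq with hlt | heq
    · simpa [Nat.mod_eq_of_lt hlt] using hr i i.2
    · simp only [heq, Nat.mod_self, ← hx]
      simpa [heq] using hr i i.2
  · push Not at hinj
    obtain ⟨i, j, hi, hj, hxij, hne⟩ := hinj
    wlog hij : i < j generalizing i j
    · exact this j i hj hi hxij.symm hne.symm (by omega)
    exact ih (j - i) (by omega) (by omega) (x := fun k => x (i + k))
      (by simp [Nat.add_sub_cancel' hij.le, hxij])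
      (fun k hk => by simpa [Nat.add_assoc] using hr (i + k) (by omega))

theorem Acyclic.not_transGen_self (h : Acyclic r) (a : V) : ¬ TransGen r a a := fun ha => by
  obtain ⟨m, hm, x, hx0, hxm, hx⟩ := ha.exists_walk
  exact h.false_of_closed_walk hm (hxm.trans hx0.symm) hx

end Cycles

theorem exists_equiv_fin_strictMono (α : Type*) [PartialOrder α] [Fintype α] :
    ∃ e : α ≃ Fin (Fintype.card α), StrictMono e := by
  let : Fintype (LinearExtension α) := ‹Fintype α›
  let f := (monoEquivOfFin (LinearExtension α) rfl).symm
  exact ⟨f.toEquiv, f.strictMono.comp (toLinearExtension.monotone.strictMono_of_injective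
    fun _ _ h => h)⟩

/-- Number the vertices along a linear extension of the reversed reachability order. -/
theorem Acyclic.exists_equiv_fin {V : Type*} [Fintype V] {r : V → V → Prop} (h : Acyclic r) :
    ∃ e : V ≃ Fin (Fintype.card V), ∀ a b, r a b → e b < e a := by
  let : PartialOrder V :=
    { le a b := ReflTransGen r b a
      le_refl _ := .refl
      le_trans _ _ _ hab hbc := hbc.trans hab
      le_antisymm a b hba hab := by
        rcases reflTransGen_iff_eq_or_transGen.mp hba with rfl | hba
        · rfl
        rcases reflTransGen_iff_eq_or_transGen.mp hab with rfl | hab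
        · rfl
        exact (h.not_transGen_self a (hab.trans hba)).elim }
  obtain ⟨e, he⟩ := exists_equiv_fin_strictMono V
  refine ⟨e, fun a b hab => he (lt_of_le_of_ne (ReflTransGen.single hab) fun hba => ?_)⟩
  subst hba
  exact h.not_transGen_self b (.single hab)

theorem two_mul_sum_range_tsub (d : ℕ) : 2 * ∑ k ∈ range d, (d - k) = d * (d + 1) := by
  induction d with
  | zero => simp
  | succ d ih =>
    rw [sum_range_succ']
    simp only [Nat.add_sub_add_right, Nat.sub_zero]
    rw [mul_add, ih]
    ring

section Counting

variable {V : Type*} [Fintype V]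

theorem mul_succ_le_two_mul_sum_tsub {δ n : ℕ} (hδ : δ ≤ n) (e : V ≃ Fin n) :
    δ * (δ + 1) ≤ 2 * ∑ v, (δ - e v) :=
  calc δ * (δ + 1) = 2 * ∑ k ∈ range δ, (δ - k) := (two_mul_sum_range_tsub δ).symm
    _ ≤ 2 * ∑ k ∈ range n, (δ - k) := by gcongr
    _ = 2 * ∑ v, (δ - e v) := by rw [← Fin.sum_univ_eq_sum_range, ← e.sum_comp]

theorem deletedCount_eq_sum (T A : V → V → Prop) :
    deletedCount T A = ∑ v, {w | T v w ∧ ¬ A v w}.ncard := by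
  classical
  simp only [deletedCount, Set.ncard_eq_toFinset_card', Set.toFinset_ofPred, card_filter,
    Fintype.sum_prod_type]

theorem outDeg_le_card (Adj : V → V → Prop) (v : V) : outDeg Adj v ≤ Fintype.card V :=
  (Set.ncard_le_card {w | Adj v w}).trans_eq Nat.card_eq_fintype_card

/-- Out-neighbours reached by a surviving arc of `A` lie below `v` in the numbering. -/
theorem outDeg_le_ncard_add {n : ℕ} (Adj A : V → V → Prop) (e : V ≃ Fin n)
    (he : ∀ a b, A a b → e b < e a) (v : V) :
    outDeg Adj v ≤ {w | Adj v w ∧ ¬ A v w}.ncard + e v :=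
  calc outDeg Adj v ≤ ({w | Adj v w ∧ ¬ A v w} ∪ {w | e w < e v}).ncard :=
        Set.ncard_le_ncard fun w hw => by
          by_cases hA : A v w
          · exact Or.inr (he v w hA)
          · exact Or.inl ⟨hw, hA⟩
    _ ≤ {w | Adj v w ∧ ¬ A v w}.ncard + {w | e w < e v}.ncard := Set.ncard_union_le _ _
    _ = {w | Adj v w ∧ ¬ A v w}.ncard + e v := by
        rw [show {w | e w < e v} = e ⁻¹' Set.Iio (e v) from rfl,
          Set.ncard_preimage_of_injective_subset_range e.injective (by simp), ← coe_Iio,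
          Set.ncard_coe_finset, Fin.card_Iio]

theorem Acyclic.outDeg_mul_succ_le_two_mul_deletedCount {Adj A : V → V → Prop} (hA : Acyclic A)
    {v : V} (hv : ∀ w, outDeg Adj v ≤ outDeg Adj w) :
    outDeg Adj v * (outDeg Adj v + 1) ≤ 2 * deletedCount Adj A := by
  obtain ⟨e, he⟩ := hA.exists_equiv_fin
  calc _ ≤ 2 * ∑ w, (outDeg Adj v - e w) := mul_succ_le_two_mul_sum_tsub (outDeg_le_card Adj v) e
    _ ≤ 2 * ∑ w, {u | Adj w u ∧ ¬ A w u}.ncard := by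
        gcongr with w
        exact tsub_le_iff_right.mpr ((hv w).trans (outDeg_le_ncard_add Adj A e he w))
    _ = 2 * deletedCount Adj A := by rw [deletedCount_eq_sum]

end Counting

theorem hamburger_et_al_general {V : Type*} [Fintype V] [Nonempty V]
    (Adj : V → V → Prop)
    (t : ℕ) (Adj' : V → V → Prop)
    (hcount : deletedCount Adj Adj' = t)
    (hacyc : Acyclic Adj') :
    ∃ v : V, (outDeg Adj v : ℝ) ≤ Real.sqrt (2 * t) := by
  obtain ⟨v, hv⟩ := Finite.exists_min (outDeg Adj)
  have hbound := hacyc.outDeg_mul_succ_le_two_mul_deletedCount hv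
  rw [hcount] at hbound
  refine ⟨v, Real.le_sqrt_of_sq_le ?_⟩
  exact_mod_cast (by nlinarith : outDeg Adj v ^ 2 ≤ 2 * t)

theorem hamburger_et_al {V : Type*} [Fintype V] [Nonempty V]
    (Adj : V → V → Prop) (hsimple : ∀ v, ¬ Adj v v)
    (t : ℕ) (Adj' : V → V → Prop)
    (hsub : ∀ a b, Adj' a b → Adj a b)
    (hcount : deletedCount Adj Adj' = t)
    (hacyc : Acyclic Adj') :
    ∃ v : V, (outDeg Adj v : ℝ) ≤ Real.sqrt (2 * t) :=
  hamburger_et_al_general Adj t Adj' hcount hacyc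
end
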